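/- arXiv:2603.27710 — 7 statements merged into one kernel-verified Lean document; each statement's English description precedes it below -/
import Mathlib

section
/- Let K₁ and K₂ be fields and let R be a subring of the product ring K₁ × K₂ such that R is a semisimple ring and both projection maps R → K₁ and R → K₂ are surjective. Then either R = K₁ × K₂, or there exists a ring isomorphism σ : K₁ ≅ K₂ such that R = {(x, σ(x)) : x ∈ K₁} is the graph of σ. -/
/-- Commutative-ring version of Goursat's lemma: a semisimple subring `R` of a product of two
fields `K₁ × K₂` which projects surjectively onto both factors is either the whole product or
the graph of a ring isomorphism `σ : K₁ ≃+* K₂`. -/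
theorem semisimple_subring_of_prod_fields_eq_top_or_graph
    {K₁ K₂ : Type*} [Field K₁] [Field K₂]
    (R : Subring (K₁ × K₂)) [IsSemisimpleRing R]
    (h₁ : Function.Surjective fun r : R => (r : K₁ × K₂).1)
    (h₂ : Function.Surjective fun r : R => (r : K₁ × K₂).2) :
    R = ⊤ ∨ ∃ σ : K₁ ≃+* K₂, ∀ x : K₁ × K₂, x ∈ R ↔ x.2 = σ x.1 := by
  by_cases hI₁ : ∃ b : K₂, b ≠ 0 ∧ ((0 : K₁), b) ∈ R
  · by_cases hI₂ : ∃ a : K₁, a ≠ 0 ∧ (a, (0 : K₂)) ∈ R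
    · -- R = ⊤
      left
      obtain ⟨b, hb, hbR⟩ := hI₁
      obtain ⟨a, ha, haR⟩ := hI₂
      have vert : ∀ y : K₂, ((0 : K₁), y) ∈ R := by
        intro y
        obtain ⟨s, hs⟩ := h₂ (y * b⁻¹)
        have := R.mul_mem s.2 hbR
        have heq : (s : K₁ × K₂) * (0, b) = ((0 : K₁), y) := by
          ext
          · simp
          · simp [hs, mul_assoc, inv_mul_cancel₀ hb]
        rwa [heq] at this
      have horiz : ∀ x : K₁, (x, (0 : K₂)) ∈ R := by
        intro x
        obtain ⟨s, hs⟩ := h₁ (x * a⁻¹)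
        have := R.mul_mem s.2 haR
        have heq : (s : K₁ × K₂) * (a, 0) = (x, (0 : K₂)) := by
          ext
          · simp [hs, mul_assoc, inv_mul_cancel₀ ha]
          · simp
        rwa [heq] at this
      ext x
      simp only [Subring.mem_top, iff_true]
      obtain ⟨r, hr⟩ := h₁ x.1
      have : x = (r : K₁ × K₂) + ((0 : K₁), x.2 - (r : K₁ × K₂).2) := by
        ext <;> simp [hr]
      rw [this]
      exact R.add_mem r.2 (vert _)
    · -- ker π₂ = 0 : graph via inverse of π₂
      right
      push_neg at hI₂
      have inj2 : Function.Injective ((RingHom.snd K₁ K₂).comp R.subtype) := by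
        intro r s hrs
        have h1 : (r : K₁ × K₂).2 = (s : K₁ × K₂).2 := hrs
        have hd : ((r : K₁ × K₂).1 - (s : K₁ × K₂).1, (0 : K₂)) ∈ R := by
          have := R.sub_mem r.2 s.2
          have heq : (r : K₁ × K₂) - (s : K₁ × K₂)
              = ((r : K₁ × K₂).1 - (s : K₁ × K₂).1, (0 : K₂)) := by
            ext <;> simp [h1]
          rwa [heq] at this
        have h0 : (r : K₁ × K₂).1 - (s : K₁ × K₂).1 = 0 := by
          by_contra hne
          exact hI₂ _ hne hd
        have : (r : K₁ × K₂) = (s : K₁ × K₂) := by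
          ext
          · exact sub_eq_zero.mp h0
          · exact h1
        exact Subtype.ext this
      let e : R ≃+* K₂ := RingEquiv.ofBijective _ ⟨inj2, h₂⟩
      let f : K₂ →+* K₁ := ((RingHom.fst K₁ K₂).comp R.subtype).comp e.symm.toRingHom
      have fsurj : Function.Surjective f := by
        intro x
        obtain ⟨r, hr⟩ := h₁ x
        refine ⟨e r, ?_⟩
        show ((e.symm (e r) : R) : K₁ × K₂).1 = x
        rw [e.symm_apply_apply]; exact hr
      let τ : K₂ ≃+* K₁ := RingEquiv.ofBijective f ⟨f.injective, fsurj⟩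
      refine ⟨τ.symm, fun x => ?_⟩
      have key : ∀ y : K₂, (e.symm y : K₁ × K₂) = (τ y, y) := by
        intro y
        ext
        · rfl
        · show ((e (e.symm y)) : K₂) = y
          rw [e.apply_symm_apply]
      constructor
      · intro hx
        have h3 := key x.2
        have h4 : e.symm x.2 = ⟨x, hx⟩ := by
          apply e.injective
          rw [e.apply_symm_apply]; rfl
        rw [h4] at h3
        have h5 : x = (τ x.2, x.2) := h3
        have h6 : x.1 = (τ x.2, x.2).1 := congrArg Prod.fst h5
        rw [h6]
        exact (RingEquiv.symm_apply_apply τ x.2).symm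
      · intro hx
        have : x = (e.symm x.2 : K₁ × K₂) := by
          rw [key x.2]
          ext
          · simp [hx]
          · rfl
        rw [this]
        exact (e.symm x.2).2
  · -- ker π₁ = 0 : graph via π₁
    right
    push_neg at hI₁
    have inj1 : Function.Injective ((RingHom.fst K₁ K₂).comp R.subtype) := by
      intro r s hrs
      have h1 : (r : K₁ × K₂).1 = (s : K₁ × K₂).1 := hrs
      have hd : ((0 : K₁), (r : K₁ × K₂).2 - (s : K₁ × K₂).2) ∈ R := by
        have := R.sub_mem r.2 s.2
        have heq : (r : K₁ × K₂) - (s : K₁ × K₂)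
            = ((0 : K₁), (r : K₁ × K₂).2 - (s : K₁ × K₂).2) := by
          ext <;> simp [h1]
        rwa [heq] at this
      have h0 : (r : K₁ × K₂).2 - (s : K₁ × K₂).2 = 0 := by
        by_contra hne
        exact hI₁ _ hne hd
      have : (r : K₁ × K₂) = (s : K₁ × K₂) := by
        ext
        · exact h1
        · exact sub_eq_zero.mp h0
      exact Subtype.ext this
    let e : R ≃+* K₁ := RingEquiv.ofBijective _ ⟨inj1, h₁⟩
    let f : K₁ →+* K₂ := ((RingHom.snd K₁ K₂).comp R.subtype).comp e.symm.toRingHom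
    have fsurj : Function.Surjective f := by
      intro y
      obtain ⟨r, hr⟩ := h₂ y
      refine ⟨e r, ?_⟩
      show ((e.symm (e r) : R) : K₁ × K₂).2 = y
      rw [e.symm_apply_apply]; exact hr
    let σ : K₁ ≃+* K₂ := RingEquiv.ofBijective f ⟨f.injective, fsurj⟩
    refine ⟨σ, fun x => ?_⟩
    have key : ∀ y : K₁, (e.symm y : K₁ × K₂) = (y, σ y) := by
      intro y
      ext
      · show ((e (e.symm y)) : K₁) = y
        rw [e.apply_symm_apply]
      · rfl
    constructor
    · intro hx
      have h3 := key x.1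
      have h4 : e.symm x.1 = ⟨x, hx⟩ := by
        apply e.injective
        rw [e.apply_symm_apply]; rfl
      rw [h4] at h3
      have h5 : x = (x.1, σ x.1) := h3
      have h6 : x.2 = (x.1, σ x.1).2 := congrArg Prod.snd h5
      exact h6
    · intro hx
      have : x = (e.symm x.1 : K₁ × K₂) := by
        rw [key x.1]
        ext
        · rfl
        · simp [hx]
      rw [this]
      exact (e.symm x.1).2
end

section
/- Let L₃ be a finite separable field extension of a field L, let L₁ and L₂ be intermediate fields of L₃/L with L₁ ∩ L₂ = L, and let L̄ be an algebraic closure of L. If f₁ : Hom_L(L₁, L̄) → ℤ and f₂ : Hom_L(L₂, L̄) → ℤ are functions satisfying f₁(φ|_{L₁}) = f₂(φ|_{L₂}) for every φ ∈ Hom_L(L₃, L̄), then there exists an integer n such that f₁ and f₂ are both the constant function with value n. Equivalently, the sequence 0 → ℤ → ℤ^{Hom_L(L₁,L̄)} ⊕ ℤ^{Hom_L(L₂,L̄)} → ℤ^{Hom_L(L₃,L̄)}, where the first map is the diagonal embedding of constants and the second sends (f₁,f₂) to the function φ ↦ f₁(φ|_{L₁}) − f₂(φ|_{L₂}), is exact.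 -/
/-!
Every `L`-embedding of `L₃` into `L̄` lands in the Galois closure `N` of `L₃`, and these embeddings
form a single orbit under `Gal(N/L)`. Hence `φ ↦ f₁ (φ|_{L₁}) = f₂ (φ|_{L₂})` becomes a function on
`Gal(N/L)`, invariant under right multiplication by the fixing groups of the images of `L₁` and of
`L₂`. By the Galois correspondence these two groups generate the fixing group of the intersection
of the images, which is `L`, so they generate all of `Gal(N/L)` and the function is constant.
Every embedding of `L₁` or `L₂` extends to `L₃`, so `f₁` and `f₂` take this constant value.
-/

open IntermediateField

section RightPeriods

variable {G β : Type*} [Group G]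

def Subgroup.rightPeriods (F : G → β) : Subgroup G where
  carrier := {s | ∀ g, F (g * s) = F g}
  one_mem' g := by rw [mul_one]
  mul_mem' ha hb g := by rw [← mul_assoc, hb, ha]
  inv_mem' {s} hs g := by rw [← hs (g * s⁻¹), inv_mul_cancel_right]

theorem Subgroup.apply_eq_apply_one_of_rightPeriods_eq_top {F : G → β}
    (h : Subgroup.rightPeriods F = ⊤) (g : G) : F g = F 1 := by
  simpa using (h ▸ Subgroup.mem_top g : g ∈ Subgroup.rightPeriods F) 1

end RightPeriods

section Galois

variable {F E : Type*} [Field F] [Field E] [Algebra F E]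

theorem IsGalois.fixingSubgroup_inf [FiniteDimensional F E] [IsGalois F E]
    (K M : IntermediateField F E) :
    (K ⊓ M).fixingSubgroup = K.fixingSubgroup ⊔ M.fixingSubgroup :=
  (IsGalois.intermediateFieldEquivSubgroup (F := F) (E := E)).map_inf K M

theorem Normal.exists_algEquiv_comp_eq [Normal F E] {K : Type*} [Field K] [Algebra F K]
    (φ ψ : K →ₐ[F] E) : ∃ σ : Gal(E/F), (σ : E →ₐ[F] E).comp φ = ψ := by
  let χ := (AlgHom.equivFieldRange φ).symm.trans (AlgHom.equivFieldRange ψ)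
  refine ⟨χ.liftNormal E, AlgHom.ext fun x ↦ ?_⟩
  simpa [χ] using χ.liftNormal_commutes E (AlgHom.equivFieldRange φ x)

theorem AlgEquiv.mul_comp_eq_of_mem_fixingSubgroup {K : Type*} [Field K] [Algebra F K]
    (φ : K →ₐ[F] E) {s : Gal(E/F)} (hs : s ∈ φ.fieldRange.fixingSubgroup) (σ : Gal(E/F)) :
    ((σ * s : Gal(E/F)) : E →ₐ[F] E).comp φ = (σ : E →ₐ[F] E).comp φ :=
  AlgHom.ext fun x ↦ congrArg σ (hs ⟨φ x, x, rfl⟩)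

instance normalClosure.isGalois {K L : Type*} [Field K] [Field L] [Algebra F K] [Algebra F L]
    [Algebra.IsSeparable F K] [Normal F L] : IsGalois F (normalClosure F K L) where
  to_isSeparable := by
    have (f : K →ₐ[F] L) : Algebra.IsSeparable F f.fieldRange :=
      Algebra.IsSeparable.of_algHom F _ (AlgHom.equivFieldRange f).symm.toAlgHom
    rw [normalClosure_def]
    infer_instance

theorem normalClosure.exists_algEquiv_comp_val_eq {K Ω : Type*} [Field K] [Field Ω]
    [Algebra F K] [Algebra F Ω] [Algebra.IsAlgebraic F K] [IsAlgClosed Ω] [Normal F Ω]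
    (ι : K →ₐ[F] normalClosure F K Ω) (M : IntermediateField F K) (ψ : M →ₐ[F] Ω) :
    ∃ σ : Gal(normalClosure F K Ω/F),
      (normalClosure F K Ω).val.comp ((σ : _ →ₐ[F] _).comp (ι.comp M.val)) = ψ := by
  obtain ⟨φ, rfl⟩ := exists_algHom_of_splits
    (fun x ↦ ⟨Algebra.IsIntegral.isIntegral x, IsAlgClosed.splits _⟩) ψ
  obtain ⟨σ, hσ⟩ := Normal.exists_algEquiv_comp_eq ι ((algHomEquiv F K Ω).symm φ)
  refine ⟨σ, ?_⟩
  rw [← AlgHom.comp_assoc _ ι, hσ, ← AlgHom.comp_assoc]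
  exact congrArg (·.comp M.val) ((algHomEquiv F K Ω).apply_symm_apply φ)

end Galois

/-- Character-group exactness: if `L₃/L` is finite separable, `L₁, L₂` are intermediate fields
with `L₁ ∩ L₂ = L`, and `f₁, f₂` are integer-valued functions on `Hom_L(L₁, L̄)` and
`Hom_L(L₂, L̄)` such that `f₁(φ|_{L₁}) = f₂(φ|_{L₂})` for all `φ ∈ Hom_L(L₃, L̄)`,
then `f₁` and `f₂` are both constant with the same value. -/
theorem exists_const_of_restriction_eq
    {L L₃ : Type*} [Field L] [Field L₃] [Algebra L L₃]
    [FiniteDimensional L L₃] [Algebra.IsSeparable L L₃]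
    (L₁ L₂ : IntermediateField L L₃) (hmeet : L₁ ⊓ L₂ = ⊥)
    (f₁ : (L₁ →ₐ[L] AlgebraicClosure L) → ℤ)
    (f₂ : (L₂ →ₐ[L] AlgebraicClosure L) → ℤ)
    (h : ∀ φ : L₃ →ₐ[L] AlgebraicClosure L,
      f₁ (φ.comp L₁.val) = f₂ (φ.comp L₂.val)) :
    ∃ n : ℤ, (∀ ψ, f₁ ψ = n) ∧ (∀ ψ, f₂ ψ = n) := by
  let N := normalClosure L L₃ (AlgebraicClosure L)
  let ι : L₃ →ₐ[L] N := (normalClosure.algHomEquiv L L₃ _).symm IsAlgClosed.lift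
  let F (σ : Gal(N/L)) : ℤ := f₁ (N.val.comp ((σ : N →ₐ[L] N).comp (ι.comp L₁.val)))
  have hF₂ (σ : Gal(N/L)) : F σ = f₂ (N.val.comp ((σ : N →ₐ[L] N).comp (ι.comp L₂.val))) := by
    simpa only [AlgHom.comp_assoc] using h (N.val.comp ((σ : N →ₐ[L] N).comp ι))
  have hdisj : (ι.comp L₁.val).fieldRange ⊓ (ι.comp L₂.val).fieldRange = ⊥ := by
    rw [fieldRange_comp_val, fieldRange_comp_val, ← IntermediateField.map_inf, hmeet,
      IntermediateField.map_bot]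
  have hF : Subgroup.rightPeriods F = ⊤ := by
    rw [eq_top_iff, ← fixingSubgroup_bot, ← hdisj, IsGalois.fixingSubgroup_inf]
    refine sup_le (fun s hs σ ↦ ?_) (fun s hs σ ↦ ?_)
    · simp only [F, AlgEquiv.mul_comp_eq_of_mem_fixingSubgroup _ hs]
    · rw [hF₂, hF₂, AlgEquiv.mul_comp_eq_of_mem_fixingSubgroup _ hs]
  refine ⟨F 1, fun ψ ↦ ?_, fun ψ ↦ ?_⟩
  · obtain ⟨σ, rfl⟩ := normalClosure.exists_algEquiv_comp_val_eq ι L₁ ψ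
    exact Subgroup.apply_eq_apply_one_of_rightPeriods_eq_top hF σ
  · obtain ⟨σ, rfl⟩ := normalClosure.exists_algEquiv_comp_val_eq ι L₂ ψ
    rw [← hF₂]
    exact Subgroup.apply_eq_apply_one_of_rightPeriods_eq_top hF σ
end

section
/- Let L₃ be a finite separable field extension of a field L, let L₁ and L₂ be intermediate fields of L₃/L with L₁ ∩ L₂ = L, and let L̄ be an algebraic closure of L. Let β denote the map sending a pair of functions (f₁ : Hom_L(L₁,L̄) → ℤ, f₂ : Hom_L(L₂,L̄) → ℤ) to the function Hom_L(L₃,L̄) → ℤ, φ ↦ f₁(φ|_{L₁}) − f₂(φ|_{L₂}). Then the cokernel of β is torsion free: if f₃ : Hom_L(L₃,L̄) → ℤ and d is a nonzero integer such that d·f₃ lies in the image of β, then f₃ itself lies in the image of β. -/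
/-- General saturation lemma: for maps `p : E → A`, `q : E → B`, if `d·f` lies in the
image of `(f₁, f₂) ↦ f₁ ∘ p - f₂ ∘ q` with `d ≠ 0`, then so does `f`. -/
theorem aux_coker_saturated {E A B : Type*} (p : E → A) (q : E → B)
    (f : E → ℤ) (d : ℤ) (hd : d ≠ 0)
    (f₁ : A → ℤ) (f₂ : B → ℤ)
    (hf : ∀ e, d * f e = f₁ (p e) - f₂ (q e)) :
    ∃ (g₁ : A → ℤ) (g₂ : B → ℤ), ∀ e, f e = g₁ (p e) - g₂ (q e) := by
  classical
  set r : (A ⊕ B) → (A ⊕ B) → Prop :=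
    fun x y => ∃ e, x = Sum.inl (p e) ∧ y = Sum.inr (q e) with hr
  set c : (A ⊕ B) → ℤ := Sum.elim f₁ f₂ with hc
  have key : ∀ x y, Relation.EqvGen r x y → d ∣ c x - c y := by
    intro x y hxy
    induction hxy with
    | rel x y hxy =>
        obtain ⟨e, hx, hy⟩ := hxy
        subst hx; subst hy
        exact ⟨f e, by simpa [hc] using (hf e).symm⟩
    | refl x => simp
    | symm x y _ ih => simpa using (dvd_neg.2 ih)
    | trans x y z _ _ ih₁ ih₂ => simpa using dvd_add ih₁ ih₂
  set k : (A ⊕ B) → ℤ := fun x => c (Quot.out (Quot.mk r x)) with hk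
  have hkd : ∀ x, d ∣ c x - k x := by
    intro x
    exact key _ _ (Quot.eq.mp (Quot.out_eq (Quot.mk r x)).symm)
  have hke : ∀ e, k (Sum.inl (p e)) = k (Sum.inr (q e)) := by
    intro e
    have : Quot.mk r (Sum.inl (p e)) = Quot.mk r (Sum.inr (q e)) :=
      Quot.sound ⟨e, rfl, rfl⟩
    simp [hk, this]
  refine ⟨fun a => (f₁ a - k (Sum.inl a)) / d, fun b => (f₂ b - k (Sum.inr b)) / d, ?_⟩
  intro e
  have h₁ : d ∣ f₁ (p e) - k (Sum.inl (p e)) := hkd (Sum.inl (p e))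
  have h₂ : d ∣ f₂ (q e) - k (Sum.inr (q e)) := hkd (Sum.inr (q e))
  apply mul_left_cancel₀ hd
  rw [hf e, mul_sub, Int.mul_ediv_cancel' h₁, Int.mul_ediv_cancel' h₂, hke e]
  ring

/-- Torsion-freeness of the cokernel of `β : (f₁, f₂) ↦ (φ ↦ f₁(φ|_{L₁}) − f₂(φ|_{L₂}))`:
if `L₃/L` is finite separable, `L₁ ∩ L₂ = L`, and `d·f₃` lies in the image of `β` for some
nonzero integer `d`, then `f₃` lies in the image of `β`. -/
theorem cokernel_torsionFree_of_restriction
    {L L₃ : Type*} [Field L] [Field L₃] [Algebra L L₃]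
    [FiniteDimensional L L₃] [Algebra.IsSeparable L L₃]
    (L₁ L₂ : IntermediateField L L₃) (hmeet : L₁ ⊓ L₂ = ⊥)
    (f₃ : (L₃ →ₐ[L] AlgebraicClosure L) → ℤ) (d : ℤ) (hd : d ≠ 0)
    (h : ∃ (f₁ : (L₁ →ₐ[L] AlgebraicClosure L) → ℤ)
          (f₂ : (L₂ →ₐ[L] AlgebraicClosure L) → ℤ),
        ∀ φ : L₃ →ₐ[L] AlgebraicClosure L,
          d * f₃ φ = f₁ (φ.comp L₁.val) - f₂ (φ.comp L₂.val)) :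
    ∃ (f₁ : (L₁ →ₐ[L] AlgebraicClosure L) → ℤ)
      (f₂ : (L₂ →ₐ[L] AlgebraicClosure L) → ℤ),
      ∀ φ : L₃ →ₐ[L] AlgebraicClosure L,
        f₃ φ = f₁ (φ.comp L₁.val) - f₂ (φ.comp L₂.val) := by
  obtain ⟨f₁, f₂, hf⟩ := h
  exact aux_coker_saturated (fun φ => φ.comp L₁.val) (fun φ => φ.comp L₂.val) f₃ d hd f₁ f₂ hf
end

section
/- Let G be a group and let H₁ and H₂ be subgroups of G whose join is all of G. Consider the relation r on the disjoint union (G/H₁) ⊔ (G/H₂) of the two left coset spaces which, for each g ∈ G, relates the coset gH₁ (in the first summand) to the coset gH₂ (in the second summand). Then the equivalence relation generated by r is the total relation: any two elements of (G/H₁) ⊔ (G/H₂) are equivalent under the equivalence closure of r. -/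
/-- If subgroups `H₁` and `H₂` generate `G`, then the equivalence relation on
`(G ⧸ H₁) ⊕ (G ⧸ H₂)` generated by relating `gH₁` to `gH₂` for every `g ∈ G`
is the total relation. -/
theorem eqvGen_total_of_join_eq_top
    {G : Type*} [Group G] (H₁ H₂ : Subgroup G) (hjoin : H₁ ⊔ H₂ = ⊤) :
    ∀ a b : (G ⧸ H₁) ⊕ (G ⧸ H₂),
      Relation.EqvGen (fun a b => ∃ g : G,
        a = Sum.inl (QuotientGroup.mk g : G ⧸ H₁) ∧
        b = Sum.inr (QuotientGroup.mk g : G ⧸ H₂)) a b := by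
  set r : (G ⧸ H₁) ⊕ (G ⧸ H₂) → (G ⧸ H₁) ⊕ (G ⧸ H₂) → Prop :=
    fun a b => ∃ g : G,
      a = Sum.inl (QuotientGroup.mk g : G ⧸ H₁) ∧
      b = Sum.inr (QuotientGroup.mk g : G ⧸ H₂) with hr
  -- key: for every g and x, inl ⟦x⟧ ~ inl ⟦x * g⟧
  have key : ∀ g x : G,
      Relation.EqvGen r (Sum.inl (QuotientGroup.mk x : G ⧸ H₁))
        (Sum.inl (QuotientGroup.mk (x * g) : G ⧸ H₁)) := by
    intro g
    have hg : g ∈ Subgroup.closure ((H₁ : Set G) ∪ (H₂ : Set G)) := by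
      rw [Subgroup.closure_union, Subgroup.closure_eq, Subgroup.closure_eq, hjoin]
      trivial
    induction hg using Subgroup.closure_induction with
    | mem h hh =>
      intro x
      rcases hh with hh | hh
      · have : (QuotientGroup.mk x : G ⧸ H₁) = QuotientGroup.mk (x * h) := by
          apply QuotientGroup.eq.mpr
          simpa using hh
        rw [← this]
        exact Relation.EqvGen.refl _
      · have h2 : (QuotientGroup.mk x : G ⧸ H₂) = QuotientGroup.mk (x * h) := by
          apply QuotientGroup.eq.mpr
          simpa using hh
        refine Relation.EqvGen.trans _ (Sum.inr (QuotientGroup.mk x : G ⧸ H₂)) _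
          (Relation.EqvGen.rel _ _ ⟨x, rfl, rfl⟩) ?_
        rw [h2]
        exact Relation.EqvGen.symm _ _ (Relation.EqvGen.rel _ _ ⟨x * h, rfl, rfl⟩)
    | one => intro x; rw [mul_one]; exact Relation.EqvGen.refl _
    | mul a b _ _ iha ihb =>
      intro x
      rw [← mul_assoc]
      exact Relation.EqvGen.trans _ _ _ (iha x) (ihb (x * a))
    | inv a _ iha =>
      intro x
      have := iha (x * a⁻¹)
      rw [inv_mul_cancel_right] at this
      exact Relation.EqvGen.symm _ _ this
  have keyl : ∀ x y : G,
      Relation.EqvGen r (Sum.inl (QuotientGroup.mk x : G ⧸ H₁))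
        (Sum.inl (QuotientGroup.mk y : G ⧸ H₁)) := by
    intro x y
    have := key (x⁻¹ * y) x
    rwa [mul_inv_cancel_left] at this
  have keyri : ∀ x : G,
      Relation.EqvGen r (Sum.inr (QuotientGroup.mk x : G ⧸ H₂))
        (Sum.inl (QuotientGroup.mk x : G ⧸ H₁)) := fun x =>
    Relation.EqvGen.symm _ _ (Relation.EqvGen.rel _ _ ⟨x, rfl, rfl⟩)
  intro a b
  rcases a with a | a <;> rcases b with b | b <;>
    induction a using QuotientGroup.induction_on <;>
    induction b using QuotientGroup.induction_on
  · exact keyl _ _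
  · exact Relation.EqvGen.trans _ _ _ (keyl _ _) (Relation.EqvGen.rel _ _ ⟨_, rfl, rfl⟩)
  · exact Relation.EqvGen.trans _ _ _ (keyri _) (keyl _ _)
  · exact Relation.EqvGen.trans _ _ _ (Relation.EqvGen.trans _ _ _ (keyri _) (keyl _ _))
      (Relation.EqvGen.rel _ _ ⟨_, rfl, rfl⟩)
end

section
/- Let p be a prime number and F a field of characteristic p. Let a, b ∈ F be algebraically independent over the prime field 𝔽_p. If i, j, k are natural numbers such that a^{p^i} + b^{p^j} = (a + b)^{p^k} in F, then i = j = k. -/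
/-- Rigidity of Frobenius exponents: if `a, b` in a field of characteristic `p` are
algebraically independent over `𝔽_p` and `a^{p^i} + b^{p^j} = (a + b)^{p^k}`, then
`i = j = k`. -/
theorem frobenius_exponents_eq_of_algebraically_independent
    {p : ℕ} (hp : p.Prime) {F : Type*} [Field F] [CharP F p]
    (a b : F)
    (hab : ∀ P : MvPolynomial (Fin 2) (ZMod p),
      MvPolynomial.eval₂ (ZMod.castHom dvd_rfl F) ![a, b] P = 0 → P = 0)
    (i j k : ℕ) (h : a ^ p ^ i + b ^ p ^ j = (a + b) ^ p ^ k) :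
    i = j ∧ j = k := by
  haveI : Fact p.Prime := ⟨hp⟩
  haveI : ExpChar F p := ExpChar.prime hp
  set P : MvPolynomial (Fin 2) (ZMod p) :=
    MvPolynomial.X 0 ^ p ^ i - MvPolynomial.X 0 ^ p ^ k +
      (MvPolynomial.X 1 ^ p ^ j - MvPolynomial.X 1 ^ p ^ k) with hP
  have hPz : P = 0 := by
    apply hab
    simp only [hP, map_add, map_sub, map_pow, MvPolynomial.eval₂_X,
      MvPolynomial.eval₂_add, MvPolynomial.eval₂_sub, MvPolynomial.eval₂_pow]
    have := add_pow_char_pow (R := F) (x := a) (y := b) (p := p) (n := k)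
    simp only [Matrix.cons_val_zero, Matrix.cons_val_one, Matrix.head_cons]
    linear_combination h + this
  have key : ∀ m n : ℕ, (Polynomial.X : Polynomial (ZMod p)) ^ p ^ m =
      Polynomial.X ^ p ^ n → m = n := by
    intro m n hmn
    have := congrArg Polynomial.natDegree hmn
    simp only [Polynomial.natDegree_X_pow] at this
    exact Nat.pow_right_injective hp.two_le this
  have hik : i = k := by
    have := congrArg (MvPolynomial.eval₂ (Polynomial.C : ZMod p →+* Polynomial (ZMod p))
      ![Polynomial.X, 0]) hPz
    simp only [hP, MvPolynomial.eval₂_add, MvPolynomial.eval₂_sub, MvPolynomial.eval₂_pow,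
      MvPolynomial.eval₂_X, MvPolynomial.eval₂_zero, Matrix.cons_val_zero, Matrix.cons_val_one,
      Matrix.head_cons] at this
    have hpos : ∀ n : ℕ, (0 : Polynomial (ZMod p)) ^ p ^ n = 0 := by
      intro n; exact zero_pow (pow_ne_zero n hp.ne_zero)
    rw [hpos, hpos, sub_zero, add_zero, sub_eq_zero] at this
    exact key _ _ this
  have hjk : j = k := by
    have := congrArg (MvPolynomial.eval₂ (Polynomial.C : ZMod p →+* Polynomial (ZMod p))
      ![0, Polynomial.X]) hPz
    simp only [hP, MvPolynomial.eval₂_add, MvPolynomial.eval₂_sub, MvPolynomial.eval₂_pow,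
      MvPolynomial.eval₂_X, MvPolynomial.eval₂_zero, Matrix.cons_val_zero, Matrix.cons_val_one,
      Matrix.head_cons] at this
    have hpos : ∀ n : ℕ, (0 : Polynomial (ZMod p)) ^ p ^ n = 0 := by
      intro n; exact zero_pow (pow_ne_zero n hp.ne_zero)
    rw [hpos, hpos, sub_zero, zero_add, sub_eq_zero] at this
    exact key _ _ this
  exact ⟨hik.trans hjk.symm, hjk⟩
end

section
/- Let p be a prime number and Ω a field of characteristic p. Let a, b ∈ Ω be elements each transcendental over the prime field 𝔽_p, such that b is algebraic over the subfield 𝔽_p(a) but b ∉ 𝔽_p(a). Let i ≥ j be natural numbers such that for every two-variable polynomial P with 𝔽_p-coefficients, P(a, b) = 0 implies P(a^{p^i}, b^{p^j}) = 0. Then i = j. -/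
open Polynomial

namespace FrobeniusRigidityAux

variable {p : ℕ} [Fact p.Prime] {Ω : Type*} [Field Ω] [CharP Ω p]

theorem frob_fix (n : ℕ) (r : ZMod p) :
    (ZMod.castHom (dvd_rfl : p ∣ p) Ω) r ^ p ^ n = (ZMod.castHom (dvd_rfl : p ∣ p) Ω) r := by
  rw [← map_pow, ZMod.pow_card_pow]

/-- Evaluation of a two-variable polynomial (as iterated polynomial) at a point, as ring hom. -/
noncomputable def EAt (p : ℕ) [Fact p.Prime] {Ω : Type*} [Field Ω] [CharP Ω p] (u v : Ω) : (ZMod p)[X][X] →+* Ω :=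
  eval₂RingHom (eval₂RingHom (ZMod.castHom (dvd_rfl : p ∣ p) Ω) u) v

theorem EAt_apply (u v : Ω) (Q : (ZMod p)[X][X]) :
    EAt p u v Q = eval₂ (eval₂RingHom (ZMod.castHom (dvd_rfl : p ∣ p) Ω) u) v Q := rfl

theorem pow_EAt (n : ℕ) (u v : Ω) (Q : (ZMod p)[X][X]) :
    EAt p u v Q ^ p ^ n = EAt p (u ^ p ^ n) (v ^ p ^ n) Q := by
  have hcomp : (iterateFrobenius Ω p n).comp (eval₂RingHom (ZMod.castHom (dvd_rfl : p ∣ p) Ω) u)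
      = eval₂RingHom (ZMod.castHom (dvd_rfl : p ∣ p) Ω) (u ^ p ^ n) := by
    apply ringHom_ext
    · intro r
      simp only [RingHom.comp_apply, coe_eval₂RingHom, eval₂_C, iterateFrobenius_def]
      exact frob_fix n r
    · simp only [RingHom.comp_apply, coe_eval₂RingHom, eval₂_X, iterateFrobenius_def]
  calc EAt p u v Q ^ p ^ n = (iterateFrobenius Ω p n) (EAt p u v Q) := by
        rw [iterateFrobenius_def]
    _ = eval₂ ((iterateFrobenius Ω p n).comp (eval₂RingHom (ZMod.castHom (dvd_rfl : p ∣ p) Ω) u))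
        ((iterateFrobenius Ω p n) v) Q := by
        rw [EAt_apply, hom_eval₂]
    _ = EAt p (u ^ p ^ n) (v ^ p ^ n) Q := by
        rw [hcomp, iterateFrobenius_def, EAt_apply]

theorem EAt_map_comp (e : ℕ) (u v : Ω) (Q : (ZMod p)[X][X]) :
    EAt p u v (Q.map (eval₂RingHom C (X ^ e : (ZMod p)[X]))) = EAt p (u ^ e) v Q := by
  rw [EAt_apply, eval₂_map, EAt_apply]
  congr 1
  apply ringHom_ext
  · intro r
    simp [RingHom.comp_apply, coe_eval₂RingHom, eval₂_C]
  · simp [RingHom.comp_apply, coe_eval₂RingHom, eval₂_X, eval₂_X_pow]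

theorem mv_transfer (u v : Ω) (Q : (ZMod p)[X][X]) :
    MvPolynomial.eval₂ (ZMod.castHom (dvd_rfl : p ∣ p) Ω) ![u, v]
      (eval₂ (eval₂RingHom MvPolynomial.C (MvPolynomial.X 0)) (MvPolynomial.X 1) Q)
      = EAt p u v Q := by
  have hhom : (MvPolynomial.eval₂Hom (ZMod.castHom (dvd_rfl : p ∣ p) Ω) ![u, v]).comp
      (eval₂RingHom (eval₂RingHom MvPolynomial.C (MvPolynomial.X (0 : Fin 2)))
        (MvPolynomial.X 1)) = EAt p u v := by
    apply ringHom_ext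
    · intro g
      induction g using Polynomial.induction_on' with
      | add f g hf hg => simp only [map_add, hf, hg]
      | monomial n r =>
        simp [RingHom.comp_apply, coe_eval₂RingHom, eval₂_monomial, EAt_apply]
    · simp [RingHom.comp_apply, coe_eval₂RingHom, eval₂_X, EAt_apply]
  have := RingHom.congr_fun hhom Q
  rwa [RingHom.comp_apply, MvPolynomial.coe_eval₂Hom, coe_eval₂RingHom] at this

theorem mem_closure_singleton_iff (a x : Ω) :
    x ∈ Subfield.closure {a} ↔ ∃ q r : (ZMod p)[X],
      eval₂ (ZMod.castHom (dvd_rfl : p ∣ p) Ω) a r ≠ 0 ∧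
      x * eval₂ (ZMod.castHom (dvd_rfl : p ∣ p) Ω) a r = eval₂ (ZMod.castHom (dvd_rfl : p ∣ p) Ω) a q := by
  constructor
  · intro hx
    induction hx using Subfield.closure_induction with
    | mem y hy =>
      rcases Set.mem_singleton_iff.mp hy with rfl
      exact ⟨X, 1, by simp, by simp⟩
    | one => exact ⟨1, 1, by simp, by simp⟩
    | add x y hx hy ihx ihy =>
      obtain ⟨q1, r1, hr1, h1⟩ := ihx
      obtain ⟨q2, r2, hr2, h2⟩ := ihy
      refine ⟨q1 * r2 + q2 * r1, r1 * r2, by simp [eval₂_mul, hr1, hr2], ?_⟩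
      simp only [eval₂_mul, eval₂_add]
      linear_combination eval₂ (ZMod.castHom (dvd_rfl : p ∣ p) Ω) a r2 * h1
        + eval₂ (ZMod.castHom (dvd_rfl : p ∣ p) Ω) a r1 * h2
    | neg x hx ihx =>
      obtain ⟨q, r, hr, h1⟩ := ihx
      exact ⟨-q, r, hr, by simp only [eval₂_neg]; linear_combination -h1⟩
    | inv x hx ihx =>
      obtain ⟨q, r, hr, h1⟩ := ihx
      rcases eq_or_ne x 0 with rfl | hx0
      · exact ⟨0, 1, by simp, by simp⟩
      · have hq : eval₂ (ZMod.castHom (dvd_rfl : p ∣ p) Ω) a q ≠ 0 := by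
          rw [← h1]; exact mul_ne_zero hx0 hr
        refine ⟨r, q, hq, ?_⟩
        rw [← h1, ← mul_assoc, inv_mul_cancel₀ hx0, one_mul]
    | mul x y hx hy ihx ihy =>
      obtain ⟨q1, r1, hr1, h1⟩ := ihx
      obtain ⟨q2, r2, hr2, h2⟩ := ihy
      refine ⟨q1 * q2, r1 * r2, by simp [eval₂_mul, hr1, hr2], ?_⟩
      simp only [eval₂_mul]
      calc x * y * (eval₂ (ZMod.castHom (dvd_rfl : p ∣ p) Ω) a r1 * eval₂ (ZMod.castHom (dvd_rfl : p ∣ p) Ω) a r2)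
          = (x * eval₂ (ZMod.castHom (dvd_rfl : p ∣ p) Ω) a r1) * (y * eval₂ (ZMod.castHom (dvd_rfl : p ∣ p) Ω) a r2) := by ring
        _ = _ := by rw [h1, h2]
  · rintro ⟨q, r, hr, hqr⟩
    have hmem : ∀ s : (ZMod p)[X], eval₂ (ZMod.castHom (dvd_rfl : p ∣ p) Ω) a s ∈ Subfield.closure {a} := by
      intro s
      induction s using Polynomial.induction_on' with
      | add f g hf hg => rw [eval₂_add]; exact add_mem hf hg
      | monomial n r =>
        rw [eval₂_monomial]
        have ha' : a ∈ Subfield.closure {a} := Subfield.subset_closure (Set.mem_singleton a)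
        have h2 : a ^ n ∈ Subfield.closure {a} := pow_mem ha' n
        have h1 : ((r.val : ℕ) : ZMod p) = r := ZMod.natCast_rightInverse r
        have h3 : (ZMod.castHom (dvd_rfl : p ∣ p) Ω) r ∈ Subfield.closure {a} := by
          rw [← h1, map_natCast]
          exact natCast_mem _ _
        exact mul_mem h3 h2
    have : x = eval₂ (ZMod.castHom (dvd_rfl : p ∣ p) Ω) a q * (eval₂ (ZMod.castHom (dvd_rfl : p ∣ p) Ω) a r)⁻¹ :=
      (eq_mul_inv_iff_mul_eq₀ hr).mpr hqr
    rw [this]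
    exact mul_mem (hmem q) (inv_mem (hmem r))

theorem comp_ratio_const {K : Type*} [Field K] {e : ℕ} (he : 2 ≤ e) {ht lc : K[X]} (hk0 : lc ≠ 0)
    (hrel : lc.comp (X ^ e) * ht = lc * ht.comp (X ^ e)) : ∃ c : K, ht = C c * lc := by
  letI : DecidableEq K := Classical.decEq K
  rcases eq_or_ne ht 0 with rfl | h0
  · exact ⟨0, by simp⟩
  have hXe : (X ^ e : K[X]).natDegree ≠ 0 := by
    rw [natDegree_X_pow]; omega
  have hcomp_ne : ∀ g : K[X], g ≠ 0 → g.comp (X ^ e) ≠ 0 := by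
    intro g hg hc
    have hl := leadingCoeff_comp (p := g) (q := X ^ e) hXe
    rw [hc] at hl
    simp only [leadingCoeff_zero, leadingCoeff_X_pow, one_pow, one_mul, mul_one] at hl
    exact hg (leadingCoeff_eq_zero.mp hl.symm)
  have hcomp_deg : ∀ g : K[X], (g.comp (X ^ e)).natDegree = g.natDegree * e := by
    intro g
    rw [natDegree_comp, natDegree_X_pow]
  have hg0 : GCDMonoid.gcd ht lc ≠ 0 := gcd_ne_zero_of_right hk0
  obtain ⟨u, hu⟩ : GCDMonoid.gcd ht lc ∣ ht := gcd_dvd_left ht lc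
  obtain ⟨v, hv⟩ : GCDMonoid.gcd ht lc ∣ lc := gcd_dvd_right ht lc
  set g := GCDMonoid.gcd ht lc with hgdef
  have hu' : ht / g = u := (EuclideanDomain.eq_div_of_mul_eq_right hg0 hu.symm).symm
  have hv' : lc / g = v := (EuclideanDomain.eq_div_of_mul_eq_right hg0 hv.symm).symm
  have cop : IsCoprime u v := by
    have := isCoprime_div_gcd_div_gcd (p := ht) (q := lc) hk0
    rwa [← hgdef, hu', hv'] at this
  have hu0 : u ≠ 0 := by intro hc; rw [hc, mul_zero] at hu; exact h0 hu
  have hv0 : v ≠ 0 := by intro hc; rw [hc, mul_zero] at hv; exact hk0 hv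
  have key : v.comp (X ^ e) * u = v * u.comp (X ^ e) := by
    apply mul_left_cancel₀ (mul_ne_zero (hcomp_ne g hg0) hg0)
    calc g.comp (X ^ e) * g * (v.comp (X ^ e) * u)
        = (g * v).comp (X ^ e) * (g * u) := by rw [mul_comp]; ring
      _ = (g * v) * ((g * u).comp (X ^ e)) := by rw [← hu, ← hv]; exact hrel
      _ = g.comp (X ^ e) * g * (v * u.comp (X ^ e)) := by rw [mul_comp]; ring
  have hσ : ∀ w : K[X], (eval₂RingHom C (X ^ e : K[X])) w = w.comp (X ^ e) := fun w => rfl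
  have copc : IsCoprime (u.comp (X ^ e)) (v.comp (X ^ e)) := by
    have := cop.map (eval₂RingHom C (X ^ e : K[X]))
    rwa [hσ, hσ] at this
  have du : u.comp (X ^ e) ∣ u :=
    copc.dvd_of_dvd_mul_left ⟨v, by linear_combination key⟩
  have dv : v.comp (X ^ e) ∣ v :=
    copc.symm.dvd_of_dvd_mul_left ⟨u, by linear_combination -key⟩
  have hud : u.natDegree = 0 := by
    have h1 := natDegree_le_of_dvd du hu0
    rw [hcomp_deg] at h1
    have h2 : u.natDegree * 2 ≤ u.natDegree * e := Nat.mul_le_mul_left _ he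
    omega
  have hvd : v.natDegree = 0 := by
    have h1 := natDegree_le_of_dvd dv hv0
    rw [hcomp_deg] at h1
    have h2 : v.natDegree * 2 ≤ v.natDegree * e := Nat.mul_le_mul_left _ he
    omega
  have hueq : u = C (u.coeff 0) := eq_C_of_natDegree_eq_zero hud
  have hveq : v = C (v.coeff 0) := eq_C_of_natDegree_eq_zero hvd
  have hvc0 : v.coeff 0 ≠ 0 := fun hc => hv0 (by rw [hveq, hc, map_zero])
  refine ⟨u.coeff 0 * (v.coeff 0)⁻¹, ?_⟩
  calc ht = g * C (u.coeff 0) := by rw [hu, ← hueq]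
    _ = g * (C (u.coeff 0 * (v.coeff 0)⁻¹) * C (v.coeff 0)) := by
        rw [← map_mul, inv_mul_cancel_right₀ hvc0]
    _ = C (u.coeff 0 * (v.coeff 0)⁻¹) * (g * C (v.coeff 0)) := by ring
    _ = C (u.coeff 0 * (v.coeff 0)⁻¹) * lc := by rw [← hveq, ← hv]

end FrobeniusRigidityAux

open FrobeniusRigidityAux

/-- Algebraically dependent case of the Frobenius rigidity: if `a, b ∈ Ω` (characteristic `p`)
are each transcendental over `𝔽_p`, `b` is algebraic over `𝔽_p(a)` but `b ∉ 𝔽_p(a)`, and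
`i ≥ j` are such that every two-variable polynomial relation over `𝔽_p` satisfied by `(a, b)`
is also satisfied by `(a^{p^i}, b^{p^j})`, then `i = j`. -/
theorem frobenius_exponents_eq_of_algebraically_dependent
    {p : ℕ} (hp : p.Prime) {Ω : Type*} [Field Ω] [CharP Ω p]
    (a b : Ω)
    (ha : ∀ P : Polynomial (ZMod p),
      Polynomial.eval₂ (ZMod.castHom dvd_rfl Ω) a P = 0 → P = 0)
    (hb : ∀ P : Polynomial (ZMod p),
      Polynomial.eval₂ (ZMod.castHom dvd_rfl Ω) b P = 0 → P = 0)
    (halg : ∃ P : Polynomial Ω, P ≠ 0 ∧ (∀ n, P.coeff n ∈ Subfield.closure {a}) ∧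
      Polynomial.eval b P = 0)
    (hnb : b ∉ Subfield.closure {a})
    (i j : ℕ) (hij : j ≤ i)
    (h : ∀ P : MvPolynomial (Fin 2) (ZMod p),
      MvPolynomial.eval₂ (ZMod.castHom dvd_rfl Ω) ![a, b] P = 0 →
      MvPolynomial.eval₂ (ZMod.castHom dvd_rfl Ω) ![a ^ p ^ i, b ^ p ^ j] P = 0) :
    i = j := by
  classical
  have hfact : Fact p.Prime := ⟨hp⟩
  by_contra hne
  have hji : j < i := lt_of_le_of_ne hij (Ne.symm hne)
  -- Step 1: produce a nonzero two-variable polynomial relation over `ZMod p`.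
  obtain ⟨P, hP0, hPc, hPev⟩ := halg
  have hchoice : ∀ n : ℕ, ∃ qr : (ZMod p)[X] × (ZMod p)[X],
      Polynomial.eval₂ (ZMod.castHom (dvd_rfl : p ∣ p) Ω) a qr.2 ≠ 0 ∧
      P.coeff n * Polynomial.eval₂ (ZMod.castHom (dvd_rfl : p ∣ p) Ω) a qr.2
        = Polynomial.eval₂ (ZMod.castHom (dvd_rfl : p ∣ p) Ω) a qr.1 := by
    intro n
    obtain ⟨q, r, h1, h2⟩ := (mem_closure_singleton_iff (p := p) a (P.coeff n)).mp (hPc n)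
    exact ⟨(q, r), h1, h2⟩
  choose qr hqr2 hqr1 using hchoice
  set N := P.natDegree with hN
  set ea : (ZMod p)[X] →+* Ω := eval₂RingHom (ZMod.castHom (dvd_rfl : p ∣ p) Ω) a with hea
  set dent : ℕ → (ZMod p)[X] :=
    fun n => ∏ m ∈ (Finset.range (N + 1)).erase n, (qr m).2 with hdent
  set den : (ZMod p)[X] := ∏ m ∈ Finset.range (N + 1), (qr m).2 with hden
  have headen : ea den ≠ 0 := by
    rw [hden, map_prod]
    exact Finset.prod_ne_zero_iff.mpr fun m _ => hqr2 m
  set Q0 : (ZMod p)[X][X] :=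
    ∑ n ∈ Finset.range (N + 1), Polynomial.monomial n ((qr n).1 * dent n) with hQ0def
  have hQ0 : EAt p a b Q0 = Polynomial.eval b P * ea den := by
    rw [hQ0def, map_sum, eval_eq_sum_range, Finset.sum_mul]
    apply Finset.sum_congr rfl
    intro n hn
    have hsplit : (qr n).2 * dent n = den := Finset.mul_prod_erase (Finset.range (N + 1)) (fun m => (qr m).2) hn
    have : EAt p a b (Polynomial.monomial n ((qr n).1 * dent n))
        = ea ((qr n).1 * dent n) * b ^ n := by
      rw [EAt_apply, eval₂_monomial]
    rw [this, map_mul]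
    have h1 : ea (qr n).1 = P.coeff n * ea (qr n).2 := (hqr1 n).symm
    rw [h1, ← hsplit, map_mul]
    ring
  have hQ0ev : EAt p a b Q0 = 0 := by rw [hQ0, hPev, zero_mul]
  have hQ0coeff : Q0.coeff N = (qr N).1 * dent N := by
    rw [hQ0def, finset_sum_coeff]
    simp only [coeff_monomial]
    rw [Finset.sum_ite_eq' (Finset.range (N + 1)) N]
    simp
  have hQ0ne : Q0 ≠ 0 := by
    intro hc
    have h1 : ea (Q0.coeff N) = P.coeff N * ea den := by
      have h2 : ea (qr N).1 = P.coeff N * ea (qr N).2 := (hqr1 N).symm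
      rw [hQ0coeff, map_mul, h2, mul_assoc, ← map_mul]
      congr 2
      exact Finset.mul_prod_erase (Finset.range (N + 1)) (fun m => (qr m).2)
        (Finset.self_mem_range_succ N)
    have hPN : P.coeff N ≠ 0 := leadingCoeff_ne_zero.mpr hP0
    rw [hc, coeff_zero, map_zero] at h1
    exact (mul_ne_zero hPN headen) h1.symm
  -- Step 2: take a relation of minimal degree in the second variable.
  have hex : ∃ n, ∃ Q : (ZMod p)[X][X], Q ≠ 0 ∧ EAt p a b Q = 0 ∧ Q.natDegree = n :=
    ⟨Q0.natDegree, Q0, hQ0ne, hQ0ev, rfl⟩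
  obtain ⟨Q, hQne, hQev, hQdeg⟩ := Nat.find_spec hex
  set e : ℕ := p ^ (i - j) with hedef
  have he2 : 2 ≤ e := le_trans hp.two_le (Nat.le_self_pow (by omega) p)
  -- Step 3: the transformed relation also vanishes at (a, b).
  have key : EAt p (a ^ p ^ i) (b ^ p ^ j) Q = 0 := by
    have := h (Polynomial.eval₂ (eval₂RingHom MvPolynomial.C (MvPolynomial.X 0))
      (MvPolynomial.X 1) Q) (by rw [mv_transfer]; exact hQev)
    rwa [mv_transfer] at this
  set σ : (ZMod p)[X] →+* (ZMod p)[X] := eval₂RingHom C (X ^ e : (ZMod p)[X]) with hσdef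
  have hpow : (a ^ p ^ j) ^ e = a ^ p ^ i := by
    rw [← pow_mul, ← pow_add, Nat.add_sub_cancel' hij]
  have hQ'' : EAt p a b (Q.map σ) = 0 := by
    have h2 : EAt p a b (Q.map σ) ^ p ^ j = 0 := by
      rw [pow_EAt, EAt_map_comp, hpow, key]
    exact (pow_eq_zero_iff (pow_ne_zero j hp.ne_zero)).mp h2
  -- Step 4: minimality forces the auxiliary combination to vanish identically.
  set lc : (ZMod p)[X] := Q.leadingCoeff with hlcdef
  have hlc : lc ≠ 0 := leadingCoeff_ne_zero.mpr hQne
  set R : (ZMod p)[X][X] := C (σ lc) * Q - C lc * Q.map σ with hRdef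
  have hRev : EAt p a b R = 0 := by
    rw [hRdef, map_sub, map_mul, map_mul, hQev, hQ'', mul_zero, mul_zero, sub_zero]
  have hRcoeff : ∀ t, R.coeff t = σ lc * Q.coeff t - lc * σ (Q.coeff t) := by
    intro t
    rw [hRdef, coeff_sub, coeff_C_mul, coeff_C_mul, coeff_map]
  have hRk : R.coeff Q.natDegree = 0 := by
    rw [hRcoeff]
    have hcn : Q.coeff Q.natDegree = lc := rfl
    rw [hcn, mul_comm, sub_self]
  have hRdeg : R.natDegree ≤ Q.natDegree := by
    refine le_trans (natDegree_sub_le _ _) (max_le ?_ ?_)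
    · exact natDegree_C_mul_le _ _
    · exact le_trans (natDegree_C_mul_le _ _) natDegree_map_le
  have hR0 : R = 0 := by
    by_contra hR
    have hRlc : R.coeff R.natDegree ≠ 0 := leadingCoeff_ne_zero.mpr hR
    have hne' : R.natDegree ≠ Q.natDegree := by
      intro hEq; rw [hEq] at hRlc; exact hRlc hRk
    have hlt : R.natDegree < Nat.find hex := by omega
    exact Nat.find_min hex hlt ⟨R, hR, hRev, rfl⟩
  have hprop : ∀ t, σ lc * Q.coeff t = lc * σ (Q.coeff t) := by
    intro t
    have h1 : R.coeff t = 0 := by rw [hR0, coeff_zero]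
    have h2 := hRcoeff t
    rw [h1] at h2
    exact sub_eq_zero.mp h2.symm
  -- Step 5: all coefficients are constant multiples of the leading coefficient.
  have hσapp : ∀ w : (ZMod p)[X], σ w = w.comp (X ^ e) := fun _ => rfl
  have hc : ∀ t, ∃ c : ZMod p, Q.coeff t = C c * lc := by
    intro t
    refine comp_ratio_const he2 hlc ?_
    rw [← hσapp, ← hσapp]
    exact hprop t
  choose c hc using hc
  -- Step 6: this contradicts transcendence of b over the prime field.
  set L : Ω := ea lc with hL
  have hLne : L ≠ 0 := fun h0 => hlc (ha lc h0)
  have hEAt : EAt p a b Q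
      = L * ∑ t ∈ Finset.range (Q.natDegree + 1),
          (ZMod.castHom (dvd_rfl : p ∣ p) Ω) (c t) * b ^ t := by
    rw [EAt_apply, eval₂_eq_sum_range, Finset.mul_sum]
    apply Finset.sum_congr rfl
    intro t _
    rw [hc t, map_mul]
    have : (eval₂RingHom (ZMod.castHom (dvd_rfl : p ∣ p) Ω) a) (C (c t))
        = (ZMod.castHom (dvd_rfl : p ∣ p) Ω) (c t) := eval₂_C _ _
    rw [this]
    ring
  have hS : ∑ t ∈ Finset.range (Q.natDegree + 1),
      (ZMod.castHom (dvd_rfl : p ∣ p) Ω) (c t) * b ^ t = 0 := by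
    rw [hQev] at hEAt
    exact (mul_eq_zero.mp hEAt.symm).resolve_left hLne
  set m : (ZMod p)[X] :=
    ∑ t ∈ Finset.range (Q.natDegree + 1), Polynomial.monomial t (c t) with hmdef
  have hmev : Polynomial.eval₂ (ZMod.castHom (dvd_rfl : p ∣ p) Ω) b m = 0 := by
    have h1 : Polynomial.eval₂ (ZMod.castHom (dvd_rfl : p ∣ p) Ω) b m
        = (eval₂RingHom (ZMod.castHom (dvd_rfl : p ∣ p) Ω) b) m := rfl
    rw [h1, hmdef, map_sum]
    rw [show (∑ t ∈ Finset.range (Q.natDegree + 1),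
      (eval₂RingHom (ZMod.castHom (dvd_rfl : p ∣ p) Ω) b) (Polynomial.monomial t (c t)))
      = ∑ t ∈ Finset.range (Q.natDegree + 1),
        (ZMod.castHom (dvd_rfl : p ∣ p) Ω) (c t) * b ^ t from
      Finset.sum_congr rfl fun t _ => eval₂_monomial _ _]
    exact hS
  have hm0 : m = 0 := hb m hmev
  have hck : c Q.natDegree = 0 := by
    have h1 := congrArg (fun q => Polynomial.coeff q Q.natDegree) hm0
    simp only [hmdef, finset_sum_coeff, coeff_monomial, coeff_zero] at h1
    rw [Finset.sum_ite_eq' (Finset.range (Q.natDegree + 1)) Q.natDegree] at h1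
    simpa using h1
  have hfinal : Q.coeff Q.natDegree = 0 := by
    rw [hc Q.natDegree, hck, map_zero, zero_mul]
  exact hlc hfinal
end

section
/- Let p be a prime number and m a positive integer. Consider the polynomial ring 𝔽_p[X, Y] in two variables and the two 𝔽_p-algebra homomorphisms ι₁, ι₂ : 𝔽_p[T] → 𝔽_p[X, Y] determined by ι₁(T) = X and ι₂(T) = Y. Then the number of maximal ideals 𝔪 of 𝔽_p[X, Y] such that the residue field 𝔽_p[X, Y]/𝔪 has exactly p^m elements and ι₁⁻¹(𝔪) = ι₂⁻¹(𝔪) (the contractions of 𝔪 along ι₁ and ι₂ agree) is at most p^m. -/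
/-!
The residue field `K` of such an `𝔪` is `𝔽_{p^m}`, and the images `x, y` of `X, Y` in `K` have
the same minimal polynomial, since `g(X) ∈ 𝔪 ↔ g(Y) ∈ 𝔪`. Embed `K` into `L = 𝔽_{p^m}`. As `L/𝔽_p`
is normal, elements with equal minimal polynomials are Galois conjugate, so after composing with an
automorphism of `L` we may assume that `x` goes to a representative `a`, fixed once for all, of its
conjugacy class. Then `𝔪` is the ideal of polynomials vanishing at `(a, c)`, where `c` is the image
of `y`; since `a` is determined by the minimal polynomial of `c`, the ideal `𝔪` is determined by
`c ∈ L`, and there are at most `|L| = p^m` such `𝔪`.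
-/

open Polynomial

section

variable {k : Type*} [Field k]

theorem minpoly_mk_eq_of_comap_aeval_eq {A : Type*} [CommRing A] [Algebra k A] {I : Ideal A}
    [I.IsPrime] {a b : A} (ha : IsIntegral k (Ideal.Quotient.mk I a))
    (h : I.comap (aeval (R := k) a).toRingHom = I.comap (aeval (R := k) b).toRingHom) :
    minpoly k (Ideal.Quotient.mk I a) = minpoly k (Ideal.Quotient.mk I b) := by
  have aeval_mk (c : A) (f : k[X]) :
      aeval (Ideal.Quotient.mk I c) f = 0 ↔ f ∈ I.comap (aeval (R := k) c).toRingHom := by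
    rw [← Ideal.Quotient.mkₐ_eq_mk k, aeval_algHom_apply, Ideal.Quotient.mkₐ_eq_mk,
      Ideal.Quotient.eq_zero_iff_mem]
    rfl
  refine minpoly.eq_of_irreducible_of_monic (minpoly.irreducible ha) ?_ (minpoly.monic ha)
  rw [aeval_mk, ← h, ← aeval_mk]
  exact minpoly.aeval k _

variable (k) (L : Type*) [Field L] [Algebra k L]

noncomputable def idealOfConjugatePair (c : L) : Ideal (MvPolynomial (Fin 2) k) :=
  RingHom.ker (MvPolynomial.aeval ![Function.invFun (minpoly k : L → k[X]) (minpoly k c), c])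

variable {k L}

theorem ker_mem_range_idealOfConjugatePair [Normal k L] (φ : MvPolynomial (Fin 2) k →ₐ[k] L)
    (h : minpoly k (φ (MvPolynomial.X 0)) = minpoly k (φ (MvPolynomial.X 1))) :
    RingHom.ker φ ∈ Set.range (idealOfConjugatePair k L) := by
  set a := Function.invFun (minpoly k : L → k[X]) (minpoly k (φ (MvPolynomial.X 0)))
  obtain ⟨σ, hσ⟩ : a ∈ MulAction.orbit (L ≃ₐ[k] L) (φ (MvPolynomial.X 0)) :=
    (Normal.minpoly_eq_iff_mem_orbit L).mp (Function.invFun_eq ⟨_, rfl⟩)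
  have hconj : minpoly k (σ (φ (MvPolynomial.X 1))) = minpoly k (φ (MvPolynomial.X 0)) :=
    (minpoly.algEquiv_eq σ _).trans h.symm
  have hcomp : MvPolynomial.aeval ![a, σ (φ (MvPolynomial.X 1))] = (σ : L →ₐ[k] L).comp φ := by
    ext i
    fin_cases i
    · simp [← hσ]
    · simp
  refine ⟨σ (φ (MvPolynomial.X 1)), ?_⟩
  rw [idealOfConjugatePair, hconj, hcomp]
  exact RingHom.ker_comp_of_injective (φ : MvPolynomial (Fin 2) k →+* L) σ.injective

end

theorem mem_range_idealOfConjugatePair_galoisField {p m : ℕ} [Fact p.Prime]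
    {𝔪 : Ideal (MvPolynomial (Fin 2) (ZMod p))} [𝔪.IsMaximal]
    (hcard : Nat.card (MvPolynomial (Fin 2) (ZMod p) ⧸ 𝔪) = p ^ m)
    (h : 𝔪.comap (aeval (R := ZMod p) (MvPolynomial.X 0 : MvPolynomial (Fin 2) (ZMod p))).toRingHom
      = 𝔪.comap (aeval (R := ZMod p) (MvPolynomial.X 1 : MvPolynomial (Fin 2) (ZMod p))).toRingHom) :
    𝔪 ∈ Set.range (idealOfConjugatePair (ZMod p) (GaloisField p m)) := by
  let := Ideal.Quotient.field 𝔪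
  have : Finite (MvPolynomial (Fin 2) (ZMod p) ⧸ 𝔪) :=
    Nat.finite_of_card_ne_zero (by simp [hcard, (Fact.out : p.Prime).ne_zero])
  let ι := GaloisField.algEquivGaloisField p m hcard
  have hker :
      RingHom.ker ((ι : _ →ₐ[ZMod p] GaloisField p m).comp (Ideal.Quotient.mkₐ _ 𝔪)) = 𝔪 :=
    (RingHom.ker_comp_of_injective (Ideal.Quotient.mk 𝔪) ι.injective).trans Ideal.mk_ker
  rw [← hker]
  apply ker_mem_range_idealOfConjugatePair
  simp only [AlgHom.comp_apply, AlgEquiv.coe_toAlgHom, minpoly.algEquiv_eq,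
    Ideal.Quotient.mkₐ_eq_mk]
  exact minpoly_mk_eq_of_comap_aeval_eq (.of_finite _ _) h

/-- Counting bound: the number of maximal ideals `𝔪` of `𝔽_p[X, Y]` whose residue field has
exactly `p^m` elements and whose contractions along the two `𝔽_p`-algebra maps
`𝔽_p[T] → 𝔽_p[X, Y]`, `T ↦ X` and `T ↦ Y`, agree, is at most `p^m`. -/
theorem card_maximal_ideals_equal_contractions_le
    (p : ℕ) (hp : p.Prime) (m : ℕ) (hm : 0 < m) :
    Set.encard {𝔪 : Ideal (MvPolynomial (Fin 2) (ZMod p)) |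
      𝔪.IsMaximal ∧
      Nat.card (MvPolynomial (Fin 2) (ZMod p) ⧸ 𝔪) = p ^ m ∧
      𝔪.comap ((Polynomial.aeval (R := ZMod p)
          (MvPolynomial.X (0 : Fin 2) : MvPolynomial (Fin 2) (ZMod p))).toRingHom) =
      𝔪.comap ((Polynomial.aeval (R := ZMod p)
          (MvPolynomial.X (1 : Fin 2) : MvPolynomial (Fin 2) (ZMod p))).toRingHom)} ≤
      (p ^ m : ℕ∞) := by
  have : Fact p.Prime := ⟨hp⟩
  calc _ ≤ (Set.range (idealOfConjugatePair (ZMod p) (GaloisField p m))).encard :=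
        Set.encard_le_encard <| by
          rintro 𝔪 ⟨_, hcard, h⟩
          exact mem_range_idealOfConjugatePair_galoisField hcard h
    _ ≤ ENat.card (GaloisField p m) := by
        rw [← Set.image_univ]
        exact (Set.encard_image_le _ _).trans Set.encard_le_card
    _ = p ^ m := by rw [ENat.card_eq_coe_natCard, GaloisField.card p m hm.ne']; norm_cast
end
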